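/- Let u_λ∈N_λ be a minimizer of J_λ over N_λ with m_λ = J_λ(u_λ). Then for every test function φ:V→ℝ with finite support, J_λ'(u_λ)·φ = 0; that is, ∫_V(Γ(u_λ,φ)+(λa+1)u_λφ)dμ = ∫_V |u_λ|^{p−1}u_λ φ dμ, so u_λ is a ground state (weak, hence pointwise) solution of −Δu+(λa(x)+1)u=|u|^{p−1}u. -/

import Mathlib

open Filter Topology Real

noncomputable section

/-- Gradient form Γ(u,v)(x) on a locally finite graph. -/
def graphGamma {V : Type*} (nbr : V → Finset V) (w : V → V → ℝ) (mu : V → ℝ)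
    (u v : V → ℝ) (x : V) : ℝ :=
  (1 / (2 * mu x)) * ∑ y ∈ nbr x, w x y * ((u y - u x) * (v y - v x))

/-- Integrand of the squared E_λ norm: μ(x)(|∇u|²(x) + (λa(x)+1)u(x)²). -/
def eInt {V : Type*} (nbr : V → Finset V) (w : V → V → ℝ) (mu a : V → ℝ)
    (lam : ℝ) (u : V → ℝ) (x : V) : ℝ :=
  mu x * (graphGamma nbr w mu u u x + (lam * a x + 1) * u x ^ 2)

/-- Squared E_λ norm: ∫_V(|∇u|²+(λa+1)u²)dμ. -/
def eNormSq {V : Type*} (nbr : V → Finset V) (w : V → V → ℝ) (mu a : V → ℝ)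
    (lam : ℝ) (u : V → ℝ) : ℝ :=
  ∑' x, eInt nbr w mu a lam u x

/-- Integrand of ∫_V |u|^{p+1} dμ. -/
def pInt {V : Type*} (mu : V → ℝ) (p : ℝ) (u : V → ℝ) (x : V) : ℝ :=
  mu x * |u x| ^ (p + 1)

/-- ∫_V |u|^{p+1} dμ. -/
def pNorm {V : Type*} (mu : V → ℝ) (p : ℝ) (u : V → ℝ) : ℝ :=
  ∑' x, pInt mu p u x

/-- Membership in E_λ (with finite L^{p+1} norm). -/
def memE {V : Type*} (nbr : V → Finset V) (w : V → V → ℝ) (mu a : V → ℝ)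
    (lam p : ℝ) (u : V → ℝ) : Prop :=
  Summable (eInt nbr w mu a lam u) ∧ Summable (pInt mu p u)

/-- The energy functional J_λ. -/
def Jfun {V : Type*} (nbr : V → Finset V) (w : V → V → ℝ) (mu a : V → ℝ)
    (lam p : ℝ) (u : V → ℝ) : ℝ :=
  (1 / 2) * eNormSq nbr w mu a lam u - (1 / (p + 1)) * pNorm mu p u

/-- The Nehari manifold N_λ. -/
def nehari {V : Type*} (nbr : V → Finset V) (w : V → V → ℝ) (mu a : V → ℝ)
    (lam p : ℝ) (u : V → ℝ) : Prop :=
  u ≠ 0 ∧ memE nbr w mu a lam p u ∧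
    eNormSq nbr w mu a lam u = pNorm mu p u

/-
Along the line `s ↦ u + s • φ`, the ray through `u + s • φ` meets the Nehari manifold at the
scale `t(s) = (E(s) / P(s))^(1/(p-1))`, where `E(s) = ‖u + s • φ‖²_{E_λ}` and
`P(s) = ∫ |u + s • φ|^{p+1}`, and the energy there is `(1/2 - 1/(p+1)) (E/P)^(2/(p-1)) E`.
Minimality of `u` makes `g(s) = (E/P)^(2/(p-1)) E` locally minimal at `s = 0`, where `E = P`.
Since `φ` is finitely supported, `E` is a quadratic polynomial in `s` and `P` differs from
`P(0)` by a finite sum, so both are differentiable, and `g'(0) = 0` reads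
`(p + 1) E'(0) = 2 P'(0)`, which is the weak equation.
-/

open Function

/-- The integrand of the `E_λ` inner product. -/
def eInner {V : Type*} (nbr : V → Finset V) (w : V → V → ℝ) (mu a : V → ℝ) (lam : ℝ)
    (u v : V → ℝ) (x : V) : ℝ :=
  mu x * (graphGamma nbr w mu u v x + (lam * a x + 1) * (u x * v x))

theorem IsLocalMin.hasDerivAt_div_rpow_mul {E P : ℝ → ℝ} {E' P' q : ℝ}
    (hmin : IsLocalMin (fun s => (E s / P s) ^ q * E s) 0)
    (hE : HasDerivAt E E' 0) (hP : HasDerivAt P P' 0) (h0 : E 0 = P 0) (hP0 : P 0 ≠ 0) :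
    q * (E' - P') + E' = 0 := by
  have hratio : E 0 / P 0 = 1 := by rw [h0, div_self hP0]
  have hderiv := (hE.div hP hP0).rpow_const (p := q) (Or.inl (by simp [hratio])) |>.mul hE
  have := hmin.hasDerivAt_eq_zero hderiv
  rw [Pi.div_apply, hratio, Real.one_rpow, Real.one_rpow, h0] at this
  field_simp at this
  linear_combination this

section Graph

variable {V : Type*} {nbr : V → Finset V} {w : V → V → ℝ} {mu a : V → ℝ} {lam p : ℝ}

theorem eInt_eq_eInner (v : V → ℝ) : eInt nbr w mu a lam v = eInner nbr w mu a lam v v := by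
  funext x
  simp only [eInt, eInner, sq]

theorem eInt_add_smul (u φ : V → ℝ) (s : ℝ) (x : V) :
    eInt nbr w mu a lam (u + s • φ) x
      = eInt nbr w mu a lam u x + 2 * s * eInner nbr w mu a lam u φ x
        + s ^ 2 * eInt nbr w mu a lam φ x := by
  have hsum : ∑ y ∈ nbr x,
        w x y * ((u y + s * φ y - (u x + s * φ x)) * (u y + s * φ y - (u x + s * φ x)))
      = ∑ y ∈ nbr x, w x y * ((u y - u x) * (u y - u x))
        + 2 * s * ∑ y ∈ nbr x, w x y * ((u y - u x) * (φ y - φ x))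
        + s ^ 2 * ∑ y ∈ nbr x, w x y * ((φ y - φ x) * (φ y - φ x)) := by
    simp only [Finset.mul_sum, ← Finset.sum_add_distrib]
    exact Finset.sum_congr rfl fun y _ => by ring
  simp only [eInt, eInner, graphGamma, Pi.add_apply, Pi.smul_apply, smul_eq_mul, hsum]
  ring

theorem eInt_smul (t : ℝ) (v : V → ℝ) (x : V) :
    eInt nbr w mu a lam (t • v) x = t ^ 2 * eInt nbr w mu a lam v x := by
  have hsum : ∑ y ∈ nbr x, w x y * ((t * v y - t * v x) * (t * v y - t * v x))
      = t ^ 2 * ∑ y ∈ nbr x, w x y * ((v y - v x) * (v y - v x)) := by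
    rw [Finset.mul_sum]
    exact Finset.sum_congr rfl fun y _ => by ring
  simp only [eInt, graphGamma, Pi.smul_apply, smul_eq_mul, hsum]
  ring

theorem pInt_smul {t : ℝ} (ht : 0 ≤ t) (v : V → ℝ) (x : V) :
    pInt mu p (t • v) x = t ^ (p + 1) * pInt mu p v x := by
  simp only [pInt, Pi.smul_apply, smul_eq_mul, abs_mul, abs_of_nonneg ht,
    Real.mul_rpow ht (abs_nonneg _)]
  ring

theorem eNormSq_smul (t : ℝ) (v : V → ℝ) :
    eNormSq nbr w mu a lam (t • v) = t ^ 2 * eNormSq nbr w mu a lam v := by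
  simp only [eNormSq, eInt_smul, tsum_mul_left]

theorem pNorm_smul {t : ℝ} (ht : 0 ≤ t) (v : V → ℝ) :
    pNorm mu p (t • v) = t ^ (p + 1) * pNorm mu p v := by
  simp only [pNorm, pInt_smul ht, tsum_mul_left]

theorem memE.smul {v : V → ℝ} (hv : memE nbr w mu a lam p v) {t : ℝ} (ht : 0 ≤ t) :
    memE nbr w mu a lam p (t • v) := by
  refine ⟨?_, ?_⟩
  · rw [show eInt nbr w mu a lam (t • v) = _ from funext (eInt_smul t v)]
    exact hv.1.mul_left _
  · rw [show pInt mu p (t • v) = _ from funext (pInt_smul ht v)]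
    exact hv.2.mul_left _

theorem pNorm_pos (hmu : ∀ x, 0 < mu x) {v : V → ℝ} (hv : Summable (pInt mu p v))
    (hne : v ≠ 0) :
    0 < pNorm mu p v := by
  obtain ⟨x, hx⟩ := Function.ne_iff.1 hne
  have hnonneg : ∀ y, 0 ≤ pInt mu p v y := fun y =>
    mul_nonneg (hmu y).le (Real.rpow_nonneg (abs_nonneg _) _)
  exact hv.tsum_pos hnonneg x (mul_pos (hmu x) (Real.rpow_pos_of_pos (abs_pos.2 hx) _))

theorem Jfun_eq_of_eNormSq_eq_pNorm {v : V → ℝ}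
    (hv : eNormSq nbr w mu a lam v = pNorm mu p v) :
    Jfun nbr w mu a lam p v = (1 / 2 - 1 / (p + 1)) * eNormSq nbr w mu a lam v := by
  rw [Jfun, ← hv]
  ring

theorem nehari_rpow_smul (hp : 1 < p) {v : V → ℝ} (hv : memE nbr w mu a lam p v)
    (hE : 0 < eNormSq nbr w mu a lam v) (hP : 0 < pNorm mu p v) :
    nehari nbr w mu a lam p
      ((eNormSq nbr w mu a lam v / pNorm mu p v) ^ (1 / (p - 1)) • v) := by
  set t := (eNormSq nbr w mu a lam v / pNorm mu p v) ^ (1 / (p - 1))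
  have ht : 0 < t := by positivity
  have htp : t ^ (p - 1) = eNormSq nbr w mu a lam v / pNorm mu p v := by
    rw [← Real.rpow_mul (by positivity), one_div_mul_cancel (by linarith), Real.rpow_one]
  refine ⟨?_, hv.smul ht.le, ?_⟩
  · intro h0
    have hzero : eNormSq nbr w mu a lam (0 : V → ℝ) = 0 := by simp [eNormSq, eInt, graphGamma]
    have := eNormSq_smul (nbr := nbr) (w := w) (mu := mu) (a := a) (lam := lam) t v
    rw [h0, hzero] at this
    exact (mul_pos (pow_pos ht 2) hE).ne' this.symm
  · rw [eNormSq_smul, pNorm_smul ht.le, show p + 1 = 2 + (p - 1) by ring, Real.rpow_add ht, htp,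
      Real.rpow_two]
    field_simp

theorem eNormSq_le_of_isMinOn_nehari (hp : 1 < p) {u : V → ℝ}
    (hu : nehari nbr w mu a lam p u)
    (hmin : IsMinOn (Jfun nbr w mu a lam p) {v | nehari nbr w mu a lam p v} u)
    {v : V → ℝ} (hv : memE nbr w mu a lam p v)
    (hE : 0 < eNormSq nbr w mu a lam v) (hP : 0 < pNorm mu p v) :
    eNormSq nbr w mu a lam u
      ≤ (eNormSq nbr w mu a lam v / pNorm mu p v) ^ (2 / (p - 1)) * eNormSq nbr w mu a lam v := by
  have hproj := nehari_rpow_smul hp hv hE hP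
  have hJ : Jfun nbr w mu a lam p u ≤ Jfun nbr w mu a lam p _ := hmin hproj
  rw [Jfun_eq_of_eNormSq_eq_pNorm hu.2.2, Jfun_eq_of_eNormSq_eq_pNorm hproj.2.2, eNormSq_smul,
    ← Real.rpow_natCast, ← Real.rpow_mul (by positivity)] at hJ
  have hc : 0 < 1 / 2 - 1 / (p + 1) := by
    rw [sub_pos]
    exact one_div_lt_one_div_of_lt two_pos (by linarith)
  rwa [show 1 / (p - 1) * ((2 : ℕ) : ℝ) = 2 / (p - 1) by push_cast; ring,
    mul_le_mul_iff_right₀ hc] at hJ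

theorem eInner_eq_zero_of_forall_nbr {v φ : V → ℝ} {x : V} (hx : φ x = 0)
    (hnbr : ∀ y ∈ nbr x, φ y = 0) : eInner nbr w mu a lam v φ x = 0 := by
  have hsum : ∑ y ∈ nbr x, w x y * ((v y - v x) * (φ y - φ x)) = 0 :=
    Finset.sum_eq_zero fun y hy => by rw [hnbr y hy, hx]; ring
  rw [eInner, graphGamma, hsum, hx]
  ring

theorem summable_eInner (hsym : ∀ x y, y ∈ nbr x ↔ x ∈ nbr y) {φ : V → ℝ}
    (hφ : (support φ).Finite) (v : V → ℝ) : Summable (eInner nbr w mu a lam v φ) := by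
  refine summable_of_hasFiniteSupport
    ((hφ.union (hφ.biUnion fun y _ => (nbr y).finite_toSet)).subset fun x hx => ?_)
  by_contra hout
  simp only [Set.mem_union, Set.mem_iUnion, mem_support, Finset.mem_coe, not_or, not_exists,
    not_not] at hout
  exact hx (eInner_eq_zero_of_forall_nbr hout.1 fun y hy =>
    by_contra fun h => hout.2 y h ((hsym x y).1 hy))

theorem hasSum_eInt_add_smul {u φ : V → ℝ} (hu : Summable (eInt nbr w mu a lam u))
    (hc : Summable (eInner nbr w mu a lam u φ)) (hφ : Summable (eInt nbr w mu a lam φ))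
    (s : ℝ) :
    HasSum (eInt nbr w mu a lam (u + s • φ))
      (eNormSq nbr w mu a lam u + 2 * s * ∑' x, eInner nbr w mu a lam u φ x
        + s ^ 2 * eNormSq nbr w mu a lam φ) := by
  rw [show eInt nbr w mu a lam (u + s • φ) = _ from funext (eInt_add_smul u φ s)]
  exact (hu.hasSum.add (hc.hasSum.mul_left (2 * s))).add (hφ.hasSum.mul_left (s ^ 2))

theorem hasDerivAt_eNormSq_add_smul {u φ : V → ℝ} (hu : Summable (eInt nbr w mu a lam u))
    (hc : Summable (eInner nbr w mu a lam u φ)) (hφ : Summable (eInt nbr w mu a lam φ)) :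
    HasDerivAt (fun s : ℝ => eNormSq nbr w mu a lam (u + s • φ))
      (2 * ∑' x, eInner nbr w mu a lam u φ x) 0 := by
  have hquad : (fun s : ℝ => eNormSq nbr w mu a lam (u + s • φ)) = fun s =>
      eNormSq nbr w mu a lam u + 2 * s * ∑' x, eInner nbr w mu a lam u φ x
        + s ^ 2 * eNormSq nbr w mu a lam φ :=
    funext fun s => (hasSum_eInt_add_smul hu hc hφ s).tsum_eq
  rw [hquad]
  have hlin : HasDerivAt (fun s : ℝ => 2 * s * ∑' x, eInner nbr w mu a lam u φ x)
      (2 * ∑' x, eInner nbr w mu a lam u φ x) 0 := by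
    simpa using
      ((hasDerivAt_id (0 : ℝ)).const_mul 2).mul_const (∑' x, eInner nbr w mu a lam u φ x)
  have hsq : HasDerivAt (fun s : ℝ => s ^ 2 * eNormSq nbr w mu a lam φ) 0 0 := by
    simpa using (hasDerivAt_pow 2 (0 : ℝ)).mul_const (eNormSq nbr w mu a lam φ)
  simpa using (hlin.const_add (eNormSq nbr w mu a lam u)).fun_add hsq

theorem hasSum_pInt_add_smul {u φ : V → ℝ} (hu : Summable (pInt mu p u))
    (hφ : (support φ).Finite) (s : ℝ) :
    HasSum (pInt mu p (u + s • φ))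
      (pNorm mu p u + ∑ x ∈ hφ.toFinset, (pInt mu p (u + s • φ) x - pInt mu p u x)) := by
  have hdiff : HasSum (fun x => pInt mu p (u + s • φ) x - pInt mu p u x)
      (∑ x ∈ hφ.toFinset, (pInt mu p (u + s • φ) x - pInt mu p u x)) :=
    hasSum_sum_of_ne_finset_zero fun x hx => by
      simp [pInt, show φ x = 0 by simpa using hx]
  have := hu.hasSum.add hdiff
  simp only [add_sub_cancel] at this
  exact this

theorem hasDerivAt_pInt_add_smul (hp : 0 < p) (u φ : V → ℝ) (x : V) :
    HasDerivAt (fun s : ℝ => pInt mu p (u + s • φ) x)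
      ((p + 1) * (mu x * (|u x| ^ (p - 1) * u x * φ x))) 0 := by
  have hline : HasDerivAt (fun s : ℝ => u x + s * φ x) (φ x) 0 := by
    simpa using ((hasDerivAt_id (0 : ℝ)).mul_const (φ x)).const_add (u x)
  have := ((hasDerivAt_abs_rpow (u x + 0 * φ x) (p := p + 1) (by linarith)).comp 0 hline).const_mul
    (mu x)
  rw [zero_mul, add_zero, show p + 1 - 2 = p - 1 by ring] at this
  exact this.congr_deriv (by ring)

theorem hasDerivAt_pNorm_add_smul (hp : 0 < p) {u φ : V → ℝ} (hu : Summable (pInt mu p u))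
    (hφ : (support φ).Finite) :
    HasDerivAt (fun s : ℝ => pNorm mu p (u + s • φ))
      ((p + 1) * ∑' x, mu x * (|u x| ^ (p - 1) * u x * φ x)) 0 := by
  rw [tsum_eq_sum (s := hφ.toFinset) fun x hx => by simp [show φ x = 0 by simpa using hx],
    Finset.mul_sum]
  have hfin : (fun s : ℝ => pNorm mu p (u + s • φ)) = fun s =>
      pNorm mu p u + ∑ x ∈ hφ.toFinset, (pInt mu p (u + s • φ) x - pInt mu p u x) :=
    funext fun s => (hasSum_pInt_add_smul hu hφ s).tsum_eq
  rw [hfin]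
  exact (HasDerivAt.fun_sum fun x _ =>
    (hasDerivAt_pInt_add_smul hp u φ x).sub_const _).const_add _

theorem memE_add_smul (hsym : ∀ x y, y ∈ nbr x ↔ x ∈ nbr y) {u φ : V → ℝ}
    (hu : memE nbr w mu a lam p u) (hφ : (support φ).Finite) (s : ℝ) :
    memE nbr w mu a lam p (u + s • φ) :=
  ⟨(hasSum_eInt_add_smul hu.1 (summable_eInner hsym hφ u)
      (eInt_eq_eInner φ ▸ summable_eInner hsym hφ φ) s).summable,
    (hasSum_pInt_add_smul hu.2 hφ s).summable⟩

end Graph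

theorem minimizer_is_solution_general {V : Type*}
    (nbr : V → Finset V) (w : V → V → ℝ) (mu a : V → ℝ)
    (hsym : ∀ x y, y ∈ nbr x ↔ x ∈ nbr y)
    (mumin : ℝ) (hmin : 0 < mumin) (hmu : ∀ x, mumin ≤ mu x)
    (lam p : ℝ) (hp : 2 ≤ p)
    (u : V → ℝ) (hneh : nehari nbr w mu a lam p u)
    (hmin' : ∀ v : V → ℝ, nehari nbr w mu a lam p v →
      Jfun nbr w mu a lam p u ≤ Jfun nbr w mu a lam p v) :
    ∀ φ : V → ℝ, (Function.support φ).Finite →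
      ∑' x, mu x * (graphGamma nbr w mu u φ x + (lam * a x + 1) * (u x * φ x))
        = ∑' x, mu x * (|u x| ^ (p - 1) * u x * φ x) := by
  intro φ hφ
  have hp1 : 1 < p := by linarith
  have hu := hneh.2.1
  set E := fun s : ℝ => eNormSq nbr w mu a lam (u + s • φ)
  set P := fun s : ℝ => pNorm mu p (u + s • φ)
  set B := ∑' x, eInner nbr w mu a lam u φ x
  set D := ∑' x, mu x * (|u x| ^ (p - 1) * u x * φ x)
  have hE : HasDerivAt E (2 * B) 0 :=
    hasDerivAt_eNormSq_add_smul hu.1 (summable_eInner hsym hφ u)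
      (eInt_eq_eInner φ ▸ summable_eInner hsym hφ φ)
  have hP : HasDerivAt P ((p + 1) * D) 0 :=
    hasDerivAt_pNorm_add_smul (by linarith) hu.2 hφ
  have hP0 : 0 < P 0 := by
    simpa [P] using pNorm_pos (fun x => hmin.trans_le (hmu x)) hu.2 hneh.1
  have hEP : E 0 = P 0 := by simpa [E, P] using hneh.2.2
  have hloc : IsLocalMin (fun s => (E s / P s) ^ (2 / (p - 1)) * E s) 0 := by
    filter_upwards [hE.continuousAt.eventually (lt_mem_nhds (hEP ▸ hP0)),
      hP.continuousAt.eventually (lt_mem_nhds hP0)] with s hEs hPs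
    rw [hEP, div_self hP0.ne', Real.one_rpow, one_mul, ← hEP]
    simpa [E] using
      eNormSq_le_of_isMinOn_nehari hp1 hneh hmin' (memE_add_smul hsym hu hφ s) hEs hPs
  have hbalance := hloc.hasDerivAt_div_rpow_mul hE hP hEP hP0.ne'
  have hq : 2 / (p - 1) * (p - 1) = 2 := div_mul_cancel₀ 2 (by linarith)
  have hdiff : (p + 1) * (B - D) = 0 := by
    linear_combination (p - 1) / 2 * hbalance - (2 * B - (p + 1) * D) / 2 * hq
  exact sub_eq_zero.1 ((mul_eq_zero.1 hdiff).resolve_left (by linarith))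

/-- A minimizer of J_λ over the Nehari manifold N_λ is a ground state solution:
J_λ'(u_λ)·φ = 0 for every finitely supported test function φ, i.e.
∫_V(Γ(u_λ,φ)+(λa+1)u_λφ)dμ = ∫_V |u_λ|^{p−1}u_λ φ dμ. -/
theorem minimizer_is_solution {V : Type*}
    (nbr : V → Finset V) (w : V → V → ℝ) (mu a : V → ℝ)
    (hsym : ∀ x y, y ∈ nbr x ↔ x ∈ nbr y)
    (hwpos : ∀ x y, y ∈ nbr x → 0 < w x y)
    (hwsym : ∀ x y, w x y = w y x)
    (mumin : ℝ) (hmin : 0 < mumin) (hmu : ∀ x, mumin ≤ mu x)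
    (ha0 : ∀ x, 0 ≤ a x)
    (lam p : ℝ) (hlam : 1 < lam) (hp : 2 ≤ p)
    (u : V → ℝ) (hneh : nehari nbr w mu a lam p u)
    (hmin' : ∀ v : V → ℝ, nehari nbr w mu a lam p v →
      Jfun nbr w mu a lam p u ≤ Jfun nbr w mu a lam p v) :
    ∀ φ : V → ℝ, (Function.support φ).Finite →
      ∑' x, mu x * (graphGamma nbr w mu u φ x + (lam * a x + 1) * (u x * φ x))
        = ∑' x, mu x * (|u x| ^ (p - 1) * u x * φ x) :=
  minimizer_is_solution_general nbr w mu a hsym mumin hmin hmu lam p hp u hneh hmin'
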